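/- Let g be a finite-dimensional complex semisimple Lie algebra with Killing form κ, and let w ∈ g be a nonzero element such that ad(w) is nilpotent. Set n_g(w) = {x ∈ g : ⁅x,w⁆ ∈ ℂ·w} and w^⊥ = {y ∈ g : κ(y,w) = 0}. Then n_g(w) ⊆ w^⊥; consequently, for every linear subspace r of g, the subspace r + n_g(w) is contained in w^⊥ if and only if r ⊆ w^⊥. -/

import Mathlib

/-! When `⁅x, w⁆ = c • w` with `c ≠ 0`, invariance of the trace form gives
`c • κ(x, w) = κ(x, ⁅x, w⁆) = κ(⁅x, x⁆, w) = 0`. When `c = 0`, the actions of `x` and `w` commute,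
so their product is nilpotent because the action of `w` is, and nilpotent endomorphisms have
trace zero. -/

namespace LieModule

variable {R L M : Type*} [CommRing R] [IsDomain R] [LieRing L] [LieAlgebra R L]
  [AddCommGroup M] [Module R M] [LieRingModule L M] [LieModule R L M]

lemma traceForm_eq_zero_of_lie_eq_zero_of_isNilpotent {x w : L} (hxw : ⁅x, w⁆ = 0)
    (hw : _root_.IsNilpotent (toEnd R L M w)) : traceForm R L M x w = 0 := by
  have hcomm : Commute (toEnd R L M x) (toEnd R L M w) := LinearMap.ext fun m ↦ by
    simp only [Module.End.mul_apply, toEnd_apply_apply, leibniz_lie x w m, hxw, zero_lie,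
      zero_add]
  rw [traceForm_apply_apply, ← Module.End.mul_eq_comp]
  exact (LinearMap.isNilpotent_trace_of_isNilpotent (hcomm.isNilpotent_mul_left hw)).eq_zero

lemma traceForm_eq_zero_of_lie_eq_smul {x w : L} {c : R} (hc : c ≠ 0) (hxw : ⁅x, w⁆ = c • w) :
    traceForm R L M x w = 0 := by
  have hsmul : c • traceForm R L M x w = 0 := by
    rw [← map_smul, ← hxw, ← traceForm_apply_lie_apply, lie_self, map_zero, LinearMap.zero_apply]
  exact (smul_eq_zero.mp hsmul).resolve_left hc

lemma traceForm_eq_zero_of_lie_eq_smul_of_isNilpotent {x w : L} {c : R} (hxw : ⁅x, w⁆ = c • w)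
    (hw : _root_.IsNilpotent (toEnd R L M w)) : traceForm R L M x w = 0 := by
  rcases eq_or_ne c 0 with rfl | hc
  · exact traceForm_eq_zero_of_lie_eq_zero_of_isNilpotent (by rwa [zero_smul] at hxw) hw
  · exact traceForm_eq_zero_of_lie_eq_smul hc hxw

end LieModule

open Pointwise in
lemma AddSubmonoid.add_subset_iff_of_zero_mem {M : Type*} [AddMonoid M] {S : AddSubmonoid M}
    {s t : Set M} (ht₀ : 0 ∈ t) (htS : t ⊆ (S : Set M)) : s + t ⊆ (S : Set M) ↔ s ⊆ (S : Set M) :=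
  ⟨(Set.subset_add_left s ht₀).trans, fun hs ↦ AddSubmonoid.add_subset hs htS⟩

open Pointwise in
theorem stabilizer_subset_killingOrthogonal_general
    (g : Type*) [LieRing g] [LieAlgebra ℂ g] [FiniteDimensional ℂ g]
    (w : g) (hnil : IsNilpotent (LieAlgebra.ad ℂ g w)) :
    {x : g | ∃ c : ℂ, ⁅x, w⁆ = c • w} ⊆ {y : g | killingForm ℂ g y w = 0} ∧
    ∀ r : Submodule ℂ g,
      ((r : Set g) + {x : g | ∃ c : ℂ, ⁅x, w⁆ = c • w} ⊆ {y : g | killingForm ℂ g y w = 0}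
        ↔ (r : Set g) ⊆ {y : g | killingForm ℂ g y w = 0}) := by
  have hstab : {x : g | ∃ c : ℂ, ⁅x, w⁆ = c • w} ⊆ {y : g | killingForm ℂ g y w = 0} :=
    fun _ ⟨_, hc⟩ ↦ LieModule.traceForm_eq_zero_of_lie_eq_smul_of_isNilpotent hc hnil
  have hperp : {y : g | killingForm ℂ g y w = 0} =
      (LinearMap.ker ((killingForm ℂ g).flip w)).toAddSubmonoid := rfl
  refine ⟨hstab, fun r ↦ ?_⟩
  rw [hperp] at hstab ⊢
  exact AddSubmonoid.add_subset_iff_of_zero_mem ⟨0, by simp⟩ hstab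

open Pointwise in
/-- For a nonzero ad-nilpotent element `w` of a complex semisimple Lie algebra `g`,
the stabilizer `n_g(w) = {x | ⁅x, w⁆ ∈ ℂ • w}` is contained in the Killing-orthogonal
complement `w^⊥` of `w`; consequently, for every linear subspace `r` of `g`,
`r + n_g(w) ⊆ w^⊥` if and only if `r ⊆ w^⊥`. -/
theorem stabilizer_subset_killingOrthogonal
    (g : Type*) [LieRing g] [LieAlgebra ℂ g] [FiniteDimensional ℂ g]
    [LieAlgebra.IsSemisimple ℂ g]
    (w : g) (hw : w ≠ 0) (hnil : IsNilpotent (LieAlgebra.ad ℂ g w)) :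
    {x : g | ∃ c : ℂ, ⁅x, w⁆ = c • w} ⊆ {y : g | killingForm ℂ g y w = 0} ∧
    ∀ r : Submodule ℂ g,
      ((r : Set g) + {x : g | ∃ c : ℂ, ⁅x, w⁆ = c • w} ⊆ {y : g | killingForm ℂ g y w = 0}
        ↔ (r : Set g) ⊆ {y : g | killingForm ℂ g y w = 0}) :=
  stabilizer_subset_killingOrthogonal_general g w hnil
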